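/- Let T be the rooted d-ary tree and C a branch of T. Then the expected number of edges of the Group-Walk random graph R_n with both endpoints in C ∩ ∂T_n tends to infinity as n → ∞. -/
import Mathlib

def ternSphere (d : ℕ) : ℕ → Finset (List (Fin d))
  | 0 => {[]}
  | n + 1 => (ternSphere d n).biUnion
      (fun l => Finset.univ.image (fun i : Fin d => l ++ [i]))

lemma mem_ternSphere {d n : ℕ} {l : List (Fin d)} :
    l ∈ ternSphere d n ↔ l.length = n := by
  induction n generalizing l with
  | zero => simp [ternSphere, List.length_eq_zero_iff]
  | succ k ih =>
    simp only [ternSphere, Finset.mem_biUnion, Finset.mem_image, Finset.mem_univ, true_and]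
    constructor
    · rintro ⟨p, hp, i, rfl⟩
      simp [ih.mp hp]
    · intro hl
      have hne : l ≠ [] := by intro h; simp [h] at hl
      refine ⟨l.dropLast, ih.mpr ?_, l.getLast hne, List.dropLast_append_getLast hne⟩
      simp [List.length_dropLast, hl]

lemma sum_sphere_succ {d : ℕ} (n : ℕ) (G : List (Fin d) → ℝ) :
    ∑ l ∈ ternSphere d (n+1), G l = ∑ p ∈ ternSphere d n, ∑ i : Fin d, G (p ++ [i]) := by
  rw [show ternSphere d (n+1) = (ternSphere d n).biUnion
      (fun l => Finset.univ.image (fun i : Fin d => l ++ [i])) from rfl]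
  rw [Finset.sum_biUnion]
  · refine Finset.sum_congr rfl fun p _ => ?_
    rw [Finset.sum_image]
    intro i _ j _ hij
    have := List.append_cancel_left hij
    simpa using this
  · intro p hp q hq hpq
    simp only [Finset.disjoint_left, Finset.mem_image, Finset.mem_univ, true_and]
    rintro x ⟨i, rfl⟩ ⟨j, hj⟩
    apply hpq
    have : q = (p ++ [i]).dropLast := by rw [← hj, List.dropLast_concat]
    simp [List.dropLast_concat] at this
    exact this.symm

lemma prefix_concat_iff {d : ℕ} {w p : List (Fin d)} (h : w.length ≤ p.length) (i : Fin d) :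
    w <+: p ++ [i] ↔ w <+: p := by
  constructor
  · intro hp
    have h1 := List.prefix_iff_eq_take.mp hp
    rw [List.take_append_of_le_length h] at h1
    exact h1 ▸ List.take_prefix _ p
  · exact fun hp => hp.trans (List.prefix_append _ _)

lemma sum_ite_prefix_succ {d : ℕ} (w : List (Fin d)) (k : ℕ) (hk : w.length ≤ k)
    (G : List (Fin d) → ℝ) :
    ∑ l ∈ ternSphere d (k+1), (if w <+: l then G l else 0)
      = ∑ p ∈ ternSphere d k, (if w <+: p then ∑ i : Fin d, G (p ++ [i]) else 0) := by
  rw [sum_sphere_succ]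
  refine Finset.sum_congr rfl fun p hp => ?_
  have hlen : w.length ≤ p.length := by rw [mem_ternSphere.mp hp]; exact hk
  have hiff : ∀ i : Fin d, (w <+: p ++ [i]) = (w <+: p) :=
    fun i => propext (prefix_concat_iff hlen i)
  by_cases h : w <+: p
  · simp only [hiff, h, if_true]
  · simp only [hiff, h, if_false, Finset.sum_const_zero]

lemma sum_ite_prefix_self {d : ℕ} (w : List (Fin d)) (G : List (Fin d) → ℝ) :
    ∑ l ∈ ternSphere d w.length, (if w <+: l then G l else 0) = G w := by
  rw [Finset.sum_eq_single_of_mem w (mem_ternSphere.mpr rfl)]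
  · simp
  · intro l hl hlw
    rw [if_neg]
    intro hp
    exact hlw (hp.eq_of_length ((mem_ternSphere.mp hl).symm)).symm

lemma harmonic_nonneg {d : ℕ} (hd : 2 ≤ d) (n : ℕ) (F : List (Fin d) → ℝ)
    (hFb : ∀ l : List (Fin d), l.length = n → 0 ≤ F l)
    (hFh : ∀ l : List (Fin d), l.length < n →
      F l * (if l = [] then (d : ℝ) else d + 1)
        = (if l = [] then 0 else F l.dropLast) + ∑ i : Fin d, F (l ++ [i])) :
    ∀ l : List (Fin d), l.length ≤ n → 0 ≤ F l := by
  have hd0 : 0 < d := by omega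
  set B : Finset (List (Fin d)) := (Finset.range (n+1)).biUnion (ternSphere d) with hB
  have memB : ∀ l : List (Fin d), l ∈ B ↔ l.length ≤ n := by
    intro l
    simp only [hB, Finset.mem_biUnion, Finset.mem_range, mem_ternSphere]
    constructor
    · rintro ⟨k, hk, rfl⟩; omega
    · intro h; exact ⟨l.length, by omega, rfl⟩
  have hBne : B.Nonempty := ⟨[], (memB []).mpr (by simp)⟩
  set mVal := B.inf' hBne F with hmVal
  have hle : ∀ l ∈ B, mVal ≤ F l := fun l hl => Finset.inf'_le F hl
  set M : Finset (List (Fin d)) := B.filter (fun l => F l = mVal) with hM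
  have hMne : M.Nonempty := by
    obtain ⟨u, hu, huv⟩ := Finset.exists_mem_eq_inf' hBne F
    exact ⟨u, Finset.mem_filter.mpr ⟨hu, huv.symm⟩⟩
  obtain ⟨u, huM, humax⟩ := M.exists_max_image List.length hMne
  obtain ⟨huB, huval⟩ := Finset.mem_filter.mp huM
  have hulen : u.length ≤ n := (memB u).mp huB
  have hun : u.length = n := by
    by_contra hne
    have hlt : u.length < n := lt_of_le_of_ne hulen hne
    haveI : NeZero d := ⟨by omega⟩
    have hchild : ∃ i : Fin d, F (u ++ [i]) ≤ mVal := by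
      by_contra hall
      push_neg at hall
      have hsum : (d : ℝ) * mVal < ∑ i : Fin d, F (u ++ [i]) := by
        have := Finset.sum_lt_sum_of_nonempty (Finset.univ_nonempty (α := Fin d))
          (fun i _ => hall i)
        simpa [mul_comm] using this
      have heq := hFh u hlt
      by_cases hu0 : u = []
      · rw [if_pos hu0, if_pos hu0, huval] at heq
        linarith
      · rw [if_neg hu0, if_neg hu0, huval] at heq
        have hpar : mVal ≤ F u.dropLast := by
          apply hle
          rw [memB]
          have := u.length_dropLast
          omega
        linarith
    obtain ⟨i, hi⟩ := hchild
    have hmemc : u ++ [i] ∈ B := by rw [memB]; simp; omega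
    have hcval : F (u ++ [i]) = mVal := le_antisymm hi (hle _ hmemc)
    have : (u ++ [i]).length ≤ u.length :=
      humax _ (Finset.mem_filter.mpr ⟨hmemc, hcval⟩)
    simp at this
  have h0 : 0 ≤ mVal := huval ▸ hFb u hun
  intro l hl
  exact h0.trans (hle l ((memB l).mpr hl))

/-- Let `T` be the rooted `d`-ary tree (`d ≥ 2`) and `C` a branch of `T`
(the set of descendants of a nonroot vertex `w`). The expected number of edges of the
Group-Walk random graph `R_n` with both endpoints in `C ∩ ∂T_n` tends to infinity as
`n → ∞`.

The walk from `v ∈ ∂T_n` first steps to the parent `v.dropLast`, so this expectation is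
`Σ_{v ∈ C ∩ ∂T_n} f_n(parent v)`, where `f n` is the harmonic function on the ball `T_n`
with boundary values the indicator of `C ∩ ∂T_n`, i.e. `f n u` is the probability that a
walk from `u` first hits `∂T_n` inside `C`. -/
theorem stmt_6 (d : ℕ) (hd : 2 ≤ d)
    (w : List (Fin d)) (hw : w ≠ [])
    (f : ℕ → List (Fin d) → ℝ)
    (hfb : ∀ n, ∀ l ∈ ternSphere d n, f n l = if w <+: l then 1 else 0)
    (hfh : ∀ n, ∀ l : List (Fin d), l.length < n →
      f n l * (if l = [] then (d : ℝ) else d + 1)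
        = (if l = [] then 0 else f n l.dropLast) + ∑ i : Fin d, f n (l ++ [i])) :
    Filter.Tendsto
      (fun n => ∑ l ∈ ternSphere d n, (if w <+: l then f n l.dropLast else 0))
      Filter.atTop Filter.atTop := by
  set m := w.length with hm
  have hm1 : 1 ≤ m := List.length_pos_iff.mpr hw
  have hd1 : (1:ℝ) < d := by exact_mod_cast hd
  have hd0 : (0:ℝ) < d := by linarith
  -- key lower bound
  have key : ∀ n, m + 1 ≤ n →
      (d:ℝ)^(n-m) - d ≤ ∑ l ∈ ternSphere d n, (if w <+: l then f n l.dropLast else 0) := by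
    intro n hn
    -- 0 ≤ f n ≤ 1 on the ball
    have hf0 : ∀ l : List (Fin d), l.length ≤ n → 0 ≤ f n l := by
      apply harmonic_nonneg hd n (f n)
      · intro l hl
        rw [hfb n l (mem_ternSphere.mpr hl)]
        split <;> norm_num
      · exact hfh n
    have hf1 : ∀ l : List (Fin d), l.length ≤ n → f n l ≤ 1 := by
      have haux : ∀ l : List (Fin d), l.length ≤ n → 0 ≤ 1 - f n l := by
        apply harmonic_nonneg hd n (fun l => 1 - f n l)
        · intro l hl
          show (0:ℝ) ≤ 1 - f n l
          rw [hfb n l (mem_ternSphere.mpr hl)]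
          split <;> norm_num
        · intro l hl
          show (1 - f n l) * (if l = [] then (d:ℝ) else d + 1)
            = (if l = [] then 0 else 1 - f n l.dropLast) + ∑ i : Fin d, (1 - f n (l ++ [i]))
          have h1 := hfh n l hl
          have hsub : ∑ i : Fin d, (1 - f n (l ++ [i]))
              = (d:ℝ) - ∑ i : Fin d, f n (l ++ [i]) := by
            rw [Finset.sum_sub_distrib, Finset.sum_const, Finset.card_univ, Fintype.card_fin,
              nsmul_eq_mul, mul_one]
          by_cases h0 : l = []
          · rw [if_pos h0, if_pos h0] at h1 ⊢
            rw [hsub]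
            linear_combination -h1
          · rw [if_neg h0, if_neg h0] at h1 ⊢
            rw [hsub]
            linear_combination -h1
      intro l hl
      linarith [haux l hl]
    -- level sums
    set H : ℕ → ℝ := fun k => ∑ l ∈ ternSphere d k, (if w <+: l then f n l else 0) with hH
    -- parent-sum identity
    have hD : ∀ k, m ≤ k →
        (∑ p ∈ ternSphere d (k+1), (if w <+: p then f n p.dropLast else 0)) = d * H k := by
      intro k hk
      rw [sum_ite_prefix_succ w k hk (fun l => f n l.dropLast), hH, Finset.mul_sum]
      refine Finset.sum_congr rfl fun p hp => ?_
      by_cases h : w <+: p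
      · simp only [h, if_true, List.dropLast_concat, Finset.sum_const, Finset.card_univ,
          Fintype.card_fin, nsmul_eq_mul]
      · simp [h]
    -- recurrence
    have hrec : ∀ k, m + 1 ≤ k → k < n → H (k+1) - d * H k = H k - d * H (k-1) := by
      intro k h1 h2
      obtain ⟨j, rfl⟩ : ∃ j, k = j + 1 := ⟨k - 1, by omega⟩
      have hmain : H (j + 1 + 1) = (d + 1) * H (j+1)
          - (∑ p ∈ ternSphere d (j+1), (if w <+: p then f n p.dropLast else 0)) := by
        simp only [hH]
        rw [sum_ite_prefix_succ w (j+1) (by omega) (f n)]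
        rw [Finset.mul_sum, ← Finset.sum_sub_distrib]
        refine Finset.sum_congr rfl fun p hp => ?_
        by_cases h : w <+: p
        · have hplen : p.length = j + 1 := mem_ternSphere.mp hp
          have hpne : p ≠ [] := by intro h0; rw [h0] at hplen; simp at hplen
          have heq := hfh n p (by omega)
          rw [if_neg hpne, if_neg hpne] at heq
          simp only [h, if_true]
          linarith
        · simp [h]
      have hDj : (∑ p ∈ ternSphere d (j+1), (if w <+: p then f n p.dropLast else 0))
          = d * H j := hD j (by omega)
      rw [hmain, hDj]
      simp only [Nat.add_sub_cancel]
      ring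
    -- constancy of H(k+1) - d H k
    have hconst : ∀ j, m + j + 1 ≤ n → H (m + j + 1) - d * H (m + j) = H (m+1) - d * H m := by
      intro j
      induction j with
      | zero => intro _; simp
      | succ i ih =>
        intro h
        have hr := hrec (m + i + 1) (by omega) (by omega)
        simp only [Nat.add_sub_cancel] at hr
        have e1 : m + (i + 1) = m + i + 1 := by omega
        rw [e1, hr]
        exact ih (by omega)
    -- counting boundary extensions
    have hcount : ∀ j, (∑ l ∈ ternSphere d (m + j), (if w <+: l then (1:ℝ) else 0))
        = (d:ℝ)^j := by
      intro j
      induction j with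
      | zero => simpa using sum_ite_prefix_self w (fun _ => (1:ℝ))
      | succ i ih =>
        rw [show m + (i+1) = (m+i) + 1 by ring,
          sum_ite_prefix_succ w (m+i) (by omega) (fun _ => (1:ℝ))]
        have : ∀ p ∈ ternSphere d (m+i),
            (if w <+: p then ∑ _i : Fin d, (1:ℝ) else 0)
              = (d:ℝ) * (if w <+: p then (1:ℝ) else 0) := by
          intro p _
          by_cases h : w <+: p <;> simp [h]
        rw [Finset.sum_congr rfl this, ← Finset.mul_sum, ih]
        ring
    have hHn : H n = (d:ℝ)^(n-m) := by
      have h1 : H n = ∑ l ∈ ternSphere d n, (if w <+: l then (1:ℝ) else 0) := by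
        refine Finset.sum_congr rfl fun l hl => ?_
        by_cases h : w <+: l
        · simp [h, hfb n l hl]
        · simp [h]
      have h2 := hcount (n - m)
      rw [show m + (n - m) = n by omega] at h2
      rw [h1, h2]
    -- bounds on H m and H (m+1)
    have hHm0 : 0 ≤ H m := by
      have : H m = f n w := sum_ite_prefix_self w (f n)
      rw [this]
      exact hf0 w (by omega)
    have hHm1 : H (m+1) ≤ d := by
      have hle1 : H (m+1) ≤ ∑ l ∈ ternSphere d (m+1), (if w <+: l then (1:ℝ) else 0) := by
        refine Finset.sum_le_sum fun l hl => ?_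
        by_cases h : w <+: l
        · simp only [h, if_true]
          exact hf1 l (by rw [mem_ternSphere.mp hl]; omega)
        · simp [h]
      have h2 := hcount 1
      rw [h2] at hle1
      simpa using hle1
    -- the target sum equals d * H (n-1)
    obtain ⟨n', rfl⟩ : ∃ n', n = n' + 1 := ⟨n - 1, by omega⟩
    have hT : (∑ l ∈ ternSphere d (n'+1), (if w <+: l then f (n'+1) l.dropLast else 0))
        = d * H n' := hD n' (by omega)
    rw [hT]
    -- combine: d * H n' = H (n'+1) - (H(m+1) - d * H m)
    have hc := hconst (n' - m) (by omega)
    rw [show m + (n' - m) + 1 = n' + 1 by omega, show m + (n' - m) = n' by omega] at hc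
    rw [hHn] at hc
    have hp : 0 ≤ (d:ℝ) * H m := mul_nonneg hd0.le hHm0
    linarith
  -- conclude tendsto
  have hlb : Filter.Tendsto (fun n => (d:ℝ)^(n-m) - d) Filter.atTop Filter.atTop := by
    apply Filter.tendsto_atTop_add_const_right
    exact (tendsto_pow_atTop_atTop_of_one_lt hd1).comp (Filter.tendsto_sub_atTop_nat m)
  exact Filter.tendsto_atTop_mono'
    _ ((Filter.eventually_ge_atTop (m+1)).mono key) hlb
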